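/- arXiv:1502.05012 — 5 statements merged into one kernel-verified Lean document; each statement's English description precedes it below -/
import Mathlib

section
/- Let E be a real Banach lattice with a 1-unconditional basis (e_i), let n ≥ 1 and m ≥ 1 be integers, let a₁, …, a_m ∈ ℝ, and let θ₁, …, θ_m ∈ {−1, 1}. Then sup{ |∑_{i=1}^m θ_i a_i x*₁(e_i) ⋯ x*ₙ(e_i)| : x*₁, …, x*ₙ ∈ B_{E*} } = sup{ |∑_{i=1}^m a_i x*₁(e_i) ⋯ x*ₙ(e_i)| : x*₁, …, x*ₙ ∈ B_{E*} }. Equivalently, ‖∑_{i=1}^m θ_i a_i e_i ⊗ ⋯ ⊗ e_i‖_ε = ‖∑_{i=1}^m a_i e_i ⊗ ⋯ ⊗ e_i‖_ε, so the tensor diagonal {e_i ⊗ ⋯ ⊗ e_i : i ∈ ℕ} is a 1-unconditional basic sequence in the n-fold injective tensor product of E. -/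
/-!
Flipping the signs of the coordinates in a finite set `S` is the operator
`R_S = id - 2 ∑_{i ∈ S} fᵢ ⊗ eᵢ`, and 1-unconditionality of the basis makes `R_S` an isometry.
Composing one of the functionals `x*ⱼ` with `R_S` keeps it in the unit ball and multiplies the
`i`-th term of `∑ᵢ aᵢ x*₁(eᵢ) ⋯ x*ₙ(eᵢ)` by the sign `θᵢ`, so both suprema run over the same set.
-/

section SignFlip

variable {E : Type*} [NormedAddCommGroup E] [NormedSpace ℝ E] {e : ℕ → E} {f : ℕ → E →L[ℝ] ℝ}

def signFlip (e : ℕ → E) (f : ℕ → E →L[ℝ] ℝ) (S : Finset ℕ) : E →L[ℝ] E :=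
  ContinuousLinearMap.id ℝ E - (2 : ℝ) • ∑ i ∈ S, (f i).smulRight (e i)

lemma signFlip_apply (S : Finset ℕ) (x : E) :
    signFlip e f S x = x - (2 : ℝ) • ∑ i ∈ S, f i x • e i := by
  simp [signFlip]

lemma signFlip_apply_basis (hBi : ∀ i j : ℕ, f i (e j) = if i = j then 1 else 0)
    (S : Finset ℕ) (j : ℕ) :
    signFlip e f S (e j) = (if j ∈ S then -1 else 1 : ℝ) • e j := by
  rw [signFlip_apply]
  simp only [hBi, ite_smul, one_smul, zero_smul, Finset.sum_ite_eq']
  split_ifs <;> module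

lemma hasSum_signFlip (hExp : ∀ x : E, HasSum (fun i => f i x • e i) x) (S : Finset ℕ) (x : E) :
    HasSum (fun i => ((if i ∈ S then -1 else 1 : ℝ) * f i x) • e i) (signFlip e f S x) := by
  have hS : HasSum (fun i => if i ∈ S then (2 : ℝ) • f i x • e i else 0)
      ((2 : ℝ) • ∑ i ∈ S, f i x • e i) := by
    rw [Finset.smul_sum, ← Finset.sum_congr rfl fun i hi => if_pos hi]
    exact hasSum_sum_of_ne_finset_zero fun i hi => if_neg hi
  convert (hExp x).sub hS using 1
  · ext i
    split_ifs <;> module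
  · exact signFlip_apply S x

lemma norm_signFlip_apply (hExp : ∀ x : E, HasSum (fun i => f i x • e i) x)
    (hUnc : ∀ (a θ : ℕ → ℝ), (∀ i, θ i = 1 ∨ θ i = -1) →
      ∀ s : Finset ℕ, ‖∑ i ∈ s, (θ i * a i) • e i‖ = ‖∑ i ∈ s, a i • e i‖)
    (S : Finset ℕ) (x : E) : ‖signFlip e f S x‖ = ‖x‖ := by
  have hsign : ∀ i, (if i ∈ S then -1 else 1 : ℝ) = 1 ∨ (if i ∈ S then -1 else 1 : ℝ) = -1 :=
    fun i => by split_ifs <;> simp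
  have hpartial := funext (hUnc (fun i => f i x) _ hsign)
  refine tendsto_nhds_unique ((hasSum_signFlip hExp S x).norm) ?_
  rw [hpartial]
  exact (hExp x).norm

lemma norm_signFlip_le (hExp : ∀ x : E, HasSum (fun i => f i x • e i) x)
    (hUnc : ∀ (a θ : ℕ → ℝ), (∀ i, θ i = 1 ∨ θ i = -1) →
      ∀ s : Finset ℕ, ‖∑ i ∈ s, (θ i * a i) • e i‖ = ‖∑ i ∈ s, a i • e i‖)
    (S : Finset ℕ) : ‖signFlip e f S‖ ≤ 1 :=
  ContinuousLinearMap.opNorm_le_bound _ zero_le_one fun x => by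
    rw [norm_signFlip_apply hExp hUnc, one_mul]

lemma exists_norm_le_one_apply_basis_eq_sign (hBi : ∀ i j : ℕ, f i (e j) = if i = j then 1 else 0)
    (hExp : ∀ x : E, HasSum (fun i => f i x • e i) x)
    (hUnc : ∀ (a θ : ℕ → ℝ), (∀ i, θ i = 1 ∨ θ i = -1) →
      ∀ s : Finset ℕ, ‖∑ i ∈ s, (θ i * a i) • e i‖ = ‖∑ i ∈ s, a i • e i‖)
    {m : ℕ} {θ : Fin m → ℝ} (hθ : ∀ i, θ i = 1 ∨ θ i = -1) :
    ∃ T : E →L[ℝ] E, ‖T‖ ≤ 1 ∧ ∀ i : Fin m, T (e i) = θ i • e i := by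
  classical
  let S := (Finset.univ.filter (θ · = -1)).map Fin.valEmbedding
  refine ⟨signFlip e f S, norm_signFlip_le hExp hUnc S, fun i => ?_⟩
  rw [signFlip_apply_basis hBi]
  congr 1
  rcases hθ i with h | h <;> norm_num [S, Fin.val_inj, h]

end SignFlip

lemma ContinuousLinearMap.prod_update_comp_apply_of_apply_eq_smul {ι 𝕜 E : Type*} [Fintype ι]
    [DecidableEq ι] [CommSemiring 𝕜] [TopologicalSpace 𝕜] [AddCommMonoid E] [TopologicalSpace E]
    [Module 𝕜 E] (φ : ι → E →L[𝕜] 𝕜) (T : E →L[𝕜] E) (j₀ : ι) {x : E} {t : 𝕜} (hx : T x = t • x) :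
    ∏ j, Function.update φ j₀ ((φ j₀).comp T) j x = t * ∏ j, φ j x := by
  have hupdate : (fun j => Function.update φ j₀ ((φ j₀).comp T) j x)
      = Function.update (fun j => φ j x) j₀ (t * φ j₀ x) := by
    ext j
    rcases eq_or_ne j j₀ with rfl | hj
    · simp [hx]
    · simp [hj]
  rw [hupdate, Finset.prod_update_of_mem (Finset.mem_univ j₀), Finset.sdiff_singleton_eq_erase,
    mul_assoc, Finset.mul_prod_erase _ (fun j => φ j x) (Finset.mem_univ j₀)]

section DiagonalValues

variable {E : Type*} [NormedAddCommGroup E] [NormedSpace ℝ E] {e : ℕ → E} {n m : ℕ}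

/-- `sSup (diagonalValues e n c)` is the injective norm of `∑ᵢ cᵢ eᵢ ⊗ ⋯ ⊗ eᵢ` (`n` factors). -/
def diagonalValues (e : ℕ → E) (n : ℕ) {m : ℕ} (c : Fin m → ℝ) : Set ℝ :=
  {r : ℝ | ∃ φ : Fin n → E →L[ℝ] ℝ, (∀ j, ‖φ j‖ ≤ 1) ∧
    r = |∑ i : Fin m, c i * ∏ j : Fin n, (φ j) (e i)|}

lemma diagonalValues_mul_subset (hn : 1 ≤ n) {T : E →L[ℝ] E}
    (hT : ‖T‖ ≤ 1) {t : Fin m → ℝ} (hTe : ∀ i : Fin m, T (e i) = t i • e i) (c : Fin m → ℝ) :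
    diagonalValues e n (fun i => t i * c i) ⊆ diagonalValues e n c := by
  rintro _ ⟨φ, hφ, rfl⟩
  let j₀ : Fin n := ⟨0, hn⟩
  refine ⟨Function.update φ j₀ ((φ j₀).comp T), fun j => ?_, ?_⟩
  · rcases eq_or_ne j j₀ with hj | hj
    · rw [hj, Function.update_self]
      exact (φ j₀).opNorm_comp_le T |>.trans (mul_le_one₀ (hφ j₀) (norm_nonneg T) hT)
    · simpa [hj] using hφ j
  · simp only [ContinuousLinearMap.prod_update_comp_apply_of_apply_eq_smul φ T j₀ (hTe _),
      mul_assoc, mul_left_comm (c _)]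

lemma diagonalValues_sign_mul (hn : 1 ≤ n) {T : E →L[ℝ] E} (hT : ‖T‖ ≤ 1) {θ : Fin m → ℝ}
    (hθ : ∀ i, θ i = 1 ∨ θ i = -1) (hTe : ∀ i : Fin m, T (e i) = θ i • e i) (c : Fin m → ℝ) :
    diagonalValues e n (fun i => θ i * c i) = diagonalValues e n c := by
  refine (diagonalValues_mul_subset hn hT hTe c).antisymm ?_
  have hθθ : (fun i => θ i * (θ i * c i)) = c := by
    ext i
    rcases hθ i with h | h <;> simp [h]
  conv_lhs => rw [← hθθ]
  exact diagonalValues_mul_subset hn hT hTe _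

end DiagonalValues

theorem stmt_4_general
    (E : Type*) [NormedAddCommGroup E] [NormedSpace ℝ E]
    (e : ℕ → E) (f : ℕ → E →L[ℝ] ℝ)
    (hBi : ∀ i j : ℕ, f i (e j) = if i = j then 1 else 0)
    (hExp : ∀ x : E, HasSum (fun i => f i x • e i) x)
    (hUnc : ∀ (a θ : ℕ → ℝ), (∀ i, θ i = 1 ∨ θ i = -1) →
      ∀ s : Finset ℕ, ‖∑ i ∈ s, (θ i * a i) • e i‖ = ‖∑ i ∈ s, a i • e i‖)
    (n m : ℕ) (hn : 1 ≤ n)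
    (a θ : Fin m → ℝ) (hθ : ∀ i, θ i = 1 ∨ θ i = -1) :
    sSup {r : ℝ | ∃ φ : Fin n → E →L[ℝ] ℝ, (∀ j, ‖φ j‖ ≤ 1) ∧
        r = |∑ i : Fin m, θ i * a i * ∏ j : Fin n, (φ j) (e i)|}
      = sSup {r : ℝ | ∃ φ : Fin n → E →L[ℝ] ℝ, (∀ j, ‖φ j‖ ≤ 1) ∧
        r = |∑ i : Fin m, a i * ∏ j : Fin n, (φ j) (e i)|} := by
  obtain ⟨T, hT, hTe⟩ := exists_norm_le_one_apply_basis_eq_sign hBi hExp hUnc hθ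
  exact congrArg sSup (diagonalValues_sign_mul hn hT hθ hTe a)

/-- Part of Lemma 3.1: for a Banach lattice `E` with a 1-unconditional basis `(eᵢ)` (with
coordinate functionals `(fᵢ)`, order defined coordinatewise), changing the signs of the
coefficients of a diagonal tensor `∑ᵢ aᵢ eᵢ ⊗ ⋯ ⊗ eᵢ` does not change its injective tensor
norm; i.e. the tensor diagonal is a 1-unconditional basic sequence in `⊗̌_{n,ε} E`. -/
theorem stmt_4
    (E : Type*) [NormedAddCommGroup E] [Lattice E] [IsOrderedAddMonoid E] [HasSolidNorm E] [NormedSpace ℝ E] [CompleteSpace E]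
    (e : ℕ → E) (f : ℕ → E →L[ℝ] ℝ)
    (hBi : ∀ i j : ℕ, f i (e j) = if i = j then 1 else 0)
    (hExp : ∀ x : E, HasSum (fun i => f i x • e i) x)
    (hUnc : ∀ (a θ : ℕ → ℝ), (∀ i, θ i = 1 ∨ θ i = -1) →
      ∀ s : Finset ℕ, ‖∑ i ∈ s, (θ i * a i) • e i‖ = ‖∑ i ∈ s, a i • e i‖)
    (hPos : ∀ x : E, 0 ≤ x ↔ ∀ i, 0 ≤ f i x)
    (n m : ℕ) (hn : 1 ≤ n) (hm : 1 ≤ m)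
    (a θ : Fin m → ℝ) (hθ : ∀ i, θ i = 1 ∨ θ i = -1) :
    sSup {r : ℝ | ∃ φ : Fin n → E →L[ℝ] ℝ, (∀ j, ‖φ j‖ ≤ 1) ∧
        r = |∑ i : Fin m, θ i * a i * ∏ j : Fin n, (φ j) (e i)|}
      = sSup {r : ℝ | ∃ φ : Fin n → E →L[ℝ] ℝ, (∀ j, ‖φ j‖ ≤ 1) ∧
        r = |∑ i : Fin m, a i * ∏ j : Fin n, (φ j) (e i)|} :=
  stmt_4_general E e f hBi hExp hUnc n m hn a θ hθ
end

section
/- Let E be a real Banach lattice with a 1-unconditional basis (e_i), let n ≥ 1 and m ≥ 1 be integers, and let b : {1, …, m}ⁿ → ℝ be any family of coefficients. Then sup{ |∑_{i=1}^m b(i, …, i) x*₁(e_i) ⋯ x*ₙ(e_i)| : x*₁, …, x*ₙ ∈ B_{E*} } ≤ sup{ |∑_{(i₁, …, iₙ) ∈ {1, …, m}ⁿ} b(i₁, …, iₙ) x*₁(e_{i₁}) ⋯ x*ₙ(e_{iₙ})| : x*₁, …, x*ₙ ∈ B_{E*} }. Equivalently, the diagonal projection Q on the n-fold injective tensor product of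 E, determined by Q(e_{i₁} ⊗ ⋯ ⊗ e_{iₙ}) = e_{i₁} ⊗ ⋯ ⊗ e_{iₙ} if i₁ = ⋯ = iₙ and Q(e_{i₁} ⊗ ⋯ ⊗ e_{iₙ}) = 0 otherwise, satisfies ‖Q u‖_ε ≤ ‖u‖_ε on finite linear combinations of basis tensors. -/
/-!
Averaging over random sign changes `eᵢ ↦ θᵢ eᵢ`, which preserve the dual unit ball by
1-unconditionality, projects onto the diagonal. Choose independent random signs `σ k` for each
coordinate `k` and let one hub coordinate `j₀` also carry their product; then
`∏ⱼ θⱼ(ιⱼ) = ∏ₖ σₖ(ιₖ) σₖ(ι_{j₀})`, whose average is `1` if `ι` is constant and `0` otherwise. Hence the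
diagonal form at `φ` is an average of full forms at the sign-twisted functionals `φⱼ ∘ D_{θⱼ}`,
each of which is bounded by the right-hand supremum.
-/

open Finset Filter

structure IsOneUnconditionalBasis {E : Type*} [NormedAddCommGroup E] [NormedSpace ℝ E]
    (e : ℕ → E) (f : ℕ → E →L[ℝ] ℝ) : Prop where
  apply_eq_ite : ∀ i j : ℕ, f i (e j) = if i = j then 1 else 0
  hasSum : ∀ x : E, HasSum (fun i => f i x • e i) x
  norm_sum_sign_smul : ∀ (a θ : ℕ → ℝ), (∀ i, θ i = 1 ∨ θ i = -1) →
    ∀ s : Finset ℕ, ‖∑ i ∈ s, (θ i * a i) • e i‖ = ‖∑ i ∈ s, a i • e i‖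

namespace IsOneUnconditionalBasis

variable {E : Type*} [NormedAddCommGroup E] [NormedSpace ℝ E] {e : ℕ → E} {f : ℕ → E →L[ℝ] ℝ}

/-- `ψ = φ ∘ D_θ` for the sign change `D_θ eᵢ = θᵢ eᵢ`, built as the scalar series
`∑ θᵢ fᵢ(x) φ(eᵢ)`: its partial sums are `φ` of partial sums of `∑ θᵢ fᵢ(x) eᵢ`, which are Cauchy
by 1-unconditionality. -/
theorem exists_comp_signFlip (hb : IsOneUnconditionalBasis e f) {θ : ℕ → ℝ}
    (hθ : ∀ i, θ i = 1 ∨ θ i = -1) (φ : E →L[ℝ] ℝ) :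
    ∃ ψ : E →L[ℝ] ℝ, ‖ψ‖ ≤ ‖φ‖ ∧ ∀ i, ψ (e i) = θ i * φ (e i) := by
  have hpartial (x : E) (s : Finset ℕ) :
      ∑ i ∈ s, θ i * f i x * φ (e i) = φ (∑ i ∈ s, (θ i * f i x) • e i) := by
    simp only [map_sum, map_smul, smul_eq_mul]
  have hsum (x : E) : Summable fun i => θ i * f i x * φ (e i) := by
    have hcauchy : CauchySeq fun s : Finset ℕ => ∑ i ∈ s, (θ i * f i x) • e i := by
      simpa only [cauchySeq_finset_iff_vanishing_norm, hb.norm_sum_sign_smul (f · x) θ hθ]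
        using Tendsto.cauchySeq (hb.hasSum x)
    rw [summable_iff_cauchySeq_finset]
    simp only [hpartial]
    exact φ.uniformContinuous.comp_cauchySeq hcauchy
  have hbound (x : E) : ‖∑' i, θ i * f i x * φ (e i)‖ ≤ ‖φ‖ * ‖x‖ := by
    refine le_of_tendsto_of_tendsto' (hsum x).hasSum.norm ((hb.hasSum x).norm.const_mul ‖φ‖)
      fun s => ?_
    rw [hpartial, ← hb.norm_sum_sign_smul (f · x) θ hθ s]
    exact φ.le_opNorm _
  let ψ : E →ₗ[ℝ] ℝ :=
    { toFun := fun x => ∑' i, θ i * f i x * φ (e i)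
      map_add' := fun x y => by
        simp only [map_add, mul_add, add_mul]
        exact (hsum x).tsum_add (hsum y)
      map_smul' := fun r x => by
        simp only [map_smul, smul_eq_mul, RingHom.id_apply, ← (hsum x).tsum_mul_left]
        congr 1 with i
        ring }
  refine ⟨ψ.mkContinuous ‖φ‖ hbound, LinearMap.mkContinuous_norm_le _ (norm_nonneg φ) _,
    fun i => ?_⟩
  simp only [LinearMap.mkContinuous_apply, ψ, LinearMap.coe_mk, AddHom.coe_mk]
  rw [tsum_eq_single i fun k hk => by simp [hb.apply_eq_ite, hk]]
  simp [hb.apply_eq_ite]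

theorem exists_comp_signFlip_fin (hb : IsOneUnconditionalBasis e f) {m : ℕ} {θ : Fin m → ℝ}
    (hθ : ∀ i, θ i = 1 ∨ θ i = -1) (φ : E →L[ℝ] ℝ) :
    ∃ ψ : E →L[ℝ] ℝ, ‖ψ‖ ≤ ‖φ‖ ∧ ∀ i : Fin m, ψ (e i) = θ i * φ (e i) := by
  have hext (k : ℕ) : Function.extend Fin.val θ 1 k = 1 ∨ Function.extend Fin.val θ 1 k = -1 := by
    by_cases hk : ∃ i : Fin m, i.val = k
    · obtain ⟨i, rfl⟩ := hk
      rw [Fin.val_injective.extend_apply]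
      exact hθ i
    · rw [Function.extend_apply' _ _ _ hk]
      exact Or.inl rfl
  obtain ⟨ψ, hψ, hψe⟩ := hb.exists_comp_signFlip hext φ
  exact ⟨ψ, hψ, fun i => by rw [hψe, Fin.val_injective.extend_apply]⟩

end IsOneUnconditionalBasis

def boolSign (b : Bool) : ℝ := if b then 1 else -1

lemma boolSign_mul_self (b : Bool) : boolSign b * boolSign b = 1 := by
  cases b <;> simp [boolSign]

lemma sum_boolSign_mul_boolSign {α : Type*} [Fintype α] [DecidableEq α] (a c : α) :
    ∑ τ : α → Bool, boolSign (τ a) * boolSign (τ c) =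
      if a = c then 2 ^ Fintype.card α else 0 := by
  let g (k : α) (x : Bool) : ℝ :=
    (if k = a then boolSign x else 1) * (if k = c then boolSign x else 1)
  have hprod (τ : α → Bool) : boolSign (τ a) * boolSign (τ c) = ∏ k, g k (τ k) := by
    simp only [g, prod_mul_distrib, prod_ite_eq', mem_univ, if_true]
  simp_rw [hprod, ← Fintype.prod_sum g]
  split_ifs with hac
  · subst hac
    have hg (k : α) (x : Bool) : g k x = 1 := by
      by_cases hk : k = a <;> simp [g, hk, boolSign_mul_self]
    simp [hg]
  · exact prod_eq_zero (mem_univ a) (by simp [g, hac, boolSign])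

section HubSign

variable {κ α : Type*} [Fintype κ] [DecidableEq κ]

def hubSign (j₀ : κ) (σ : κ → α → Bool) (j : κ) (a : α) : ℝ :=
  boolSign (σ j a) * if j = j₀ then ∏ k, boolSign (σ k a) else 1

lemma hubSign_eq_one_or_neg_one (j₀ : κ) (σ : κ → α → Bool) (j : κ) (a : α) :
    hubSign j₀ σ j a = 1 ∨ hubSign j₀ σ j a = -1 := by
  have hprod : (∏ k, boolSign (σ k a)) * ∏ k, boolSign (σ k a) = 1 := by
    simp [← prod_mul_distrib, boolSign_mul_self]
  rw [← mul_self_eq_one_iff, hubSign]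
  split_ifs <;> simp only [mul_mul_mul_comm, boolSign_mul_self, hprod, mul_one]

lemma prod_hubSign (j₀ : κ) (σ : κ → α → Bool) (ι : κ → α) :
    ∏ j, hubSign j₀ σ j (ι j) = ∏ k, boolSign (σ k (ι k)) * boolSign (σ k (ι j₀)) := by
  simp only [hubSign, prod_mul_distrib, prod_ite_eq', mem_univ, if_true]

variable [Fintype α] [DecidableEq α]

lemma sum_prod_hubSign (j₀ : κ) (ι : κ → α) :
    ∑ σ : κ → α → Bool, ∏ j, hubSign j₀ σ j (ι j) =
      if ∀ j, ι j = ι j₀ then 2 ^ (Fintype.card α * Fintype.card κ) else 0 := by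
  simp_rw [prod_hubSign,
    ← Fintype.prod_sum fun k (τ : α → Bool) => boolSign (τ (ι k)) * boolSign (τ (ι j₀)),
    sum_boolSign_mul_boolSign, prod_ite_zero, prod_const, card_univ, pow_mul, mem_univ,
    true_imp_iff]

lemma sum_ite_forall_eq (j₀ : κ) (w : (κ → α) → ℝ) :
    ∑ ι : κ → α, (if ∀ j, ι j = ι j₀ then w ι else 0) = ∑ a, w fun _ => a := by
  rw [← sum_filter]
  refine sum_nbij' (fun ι => ι j₀) (fun a _ => a) (by simp) (by simp) ?_ (by simp) ?_
  all_goals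
    intro ι hι
    simp only [mem_filter, mem_univ, true_and] at hι
  · exact funext fun j => (hι j).symm
  · exact congrArg w (funext hι)

lemma sum_sum_prod_hubSign_mul (j₀ : κ) (w : (κ → α) → ℝ) :
    ∑ σ : κ → α → Bool, ∑ ι : κ → α, (∏ j, hubSign j₀ σ j (ι j)) * w ι =
      2 ^ (Fintype.card α * Fintype.card κ) * ∑ a, w fun _ => a := by
  rw [sum_comm]
  simp_rw [← sum_mul, sum_prod_hubSign, ite_zero_mul, ← mul_ite_zero, ← mul_sum,
    sum_ite_forall_eq]

end HubSign

lemma bddAbove_abs_sum_mul_prod_apply {E ι κ : Type*} [NormedAddCommGroup E] [NormedSpace ℝ E]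
    [Fintype ι] [Fintype κ] (b : ι → ℝ) (x : ι → κ → E) :
    BddAbove {r : ℝ | ∃ φ : κ → E →L[ℝ] ℝ, (∀ j, ‖φ j‖ ≤ 1) ∧
      r = |∑ t, b t * ∏ j, φ j (x t j)|} := by
  refine ⟨∑ t, |b t| * ∏ j, ‖x t j‖, ?_⟩
  rintro _ ⟨φ, hφ, rfl⟩
  calc |∑ t, b t * ∏ j, φ j (x t j)| ≤ ∑ t, |b t| * ∏ j, |φ j (x t j)| := by
        simpa only [abs_mul, abs_prod]
          using abs_sum_le_sum_abs (fun t => b t * ∏ j, φ j (x t j)) univ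
    _ ≤ ∑ t, |b t| * ∏ j, ‖x t j‖ := by
        gcongr with t _ j _
        simpa only [Real.norm_eq_abs, one_mul] using (φ j).le_of_opNorm_le (hφ j) (x t j)

lemma abs_le_of_card_mul_eq_sum {β : Type*} [Fintype β] [Nonempty β] {x M : ℝ} (y : β → ℝ)
    (hx : Fintype.card β * x = ∑ σ, y σ) (hy : ∀ σ, |y σ| ≤ M) : |x| ≤ M := by
  have hcard : (0 : ℝ) < Fintype.card β := by exact_mod_cast Fintype.card_pos
  refine le_of_mul_le_mul_left ?_ hcard
  calc Fintype.card β * |x| = |∑ σ, y σ| := by rw [← hx, abs_mul, Nat.abs_cast]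
    _ ≤ ∑ σ, |y σ| := abs_sum_le_sum_abs _ _
    _ ≤ Fintype.card β * M := by simpa using sum_le_sum fun σ (_ : σ ∈ univ) => hy σ

theorem stmt_5_general
    (E : Type*) [NormedAddCommGroup E] [NormedSpace ℝ E]
    (e : ℕ → E) (f : ℕ → E →L[ℝ] ℝ)
    (hBi : ∀ i j : ℕ, f i (e j) = if i = j then 1 else 0)
    (hExp : ∀ x : E, HasSum (fun i => f i x • e i) x)
    (hUnc : ∀ (a θ : ℕ → ℝ), (∀ i, θ i = 1 ∨ θ i = -1) →
      ∀ s : Finset ℕ, ‖∑ i ∈ s, (θ i * a i) • e i‖ = ‖∑ i ∈ s, a i • e i‖)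
    (n m : ℕ) (hn : 1 ≤ n)
    (b : (Fin n → Fin m) → ℝ) :
    sSup {r : ℝ | ∃ φ : Fin n → E →L[ℝ] ℝ, (∀ j, ‖φ j‖ ≤ 1) ∧
        r = |∑ i : Fin m, b (fun _ => i) * ∏ j : Fin n, (φ j) (e i)|}
      ≤ sSup {r : ℝ | ∃ φ : Fin n → E →L[ℝ] ℝ, (∀ j, ‖φ j‖ ≤ 1) ∧
        r = |∑ ι : Fin n → Fin m, b ι * ∏ j : Fin n, (φ j) (e (ι j))|} := by
  have hb : IsOneUnconditionalBasis e f := ⟨hBi, hExp, hUnc⟩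
  let j₀ : Fin n := ⟨0, hn⟩
  refine csSup_le ⟨_, 0, fun _ => by simp, rfl⟩ ?_
  rintro _ ⟨φ, hφ, rfl⟩
  choose ψ hψ hψe using fun σ j =>
    hb.exists_comp_signFlip_fin (hubSign_eq_one_or_neg_one j₀ σ j) (φ j)
  refine abs_le_of_card_mul_eq_sum
    (fun σ => ∑ ι : Fin n → Fin m, b ι * ∏ j, ψ σ j (e (ι j))) ?_ fun σ => ?_
  · have hT (σ : Fin n → Fin m → Bool) : ∑ ι : Fin n → Fin m, b ι * ∏ j, ψ σ j (e (ι j)) =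
        ∑ ι : Fin n → Fin m, (∏ j, hubSign j₀ σ j (ι j)) * (b ι * ∏ j, φ j (e (ι j))) := by
      simp only [hψe, prod_mul_distrib]
      exact sum_congr rfl fun ι _ => by ring
    simp only [hT, sum_sum_prod_hubSign_mul, Fintype.card_fun, Fintype.card_bool,
      Fintype.card_fin, Nat.cast_pow, Nat.cast_ofNat, pow_mul]
  · exact le_csSup (bddAbove_abs_sum_mul_prod_apply b fun ι j => e (ι j))
      ⟨ψ σ, fun j => (hψ σ j).trans (hφ j), rfl⟩

/-- Part of Lemma 3.1: for a Banach lattice `E` with a 1-unconditional basis `(eᵢ)`, the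
injective tensor norm of the diagonal part of a finite tensor
`∑ b(i₁, …, iₙ) e_{i₁} ⊗ ⋯ ⊗ e_{iₙ}` is at most the injective tensor norm of the whole
tensor; i.e. the diagonal projection `Q` on `⊗̌_{n,ε} E` is contractive. -/
theorem stmt_5
    (E : Type*) [NormedAddCommGroup E] [Lattice E] [HasSolidNorm E] [IsOrderedAddMonoid E] [NormedSpace ℝ E] [CompleteSpace E]
    (e : ℕ → E) (f : ℕ → E →L[ℝ] ℝ)
    (hBi : ∀ i j : ℕ, f i (e j) = if i = j then 1 else 0)
    (hExp : ∀ x : E, HasSum (fun i => f i x • e i) x)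
    (hUnc : ∀ (a θ : ℕ → ℝ), (∀ i, θ i = 1 ∨ θ i = -1) →
      ∀ s : Finset ℕ, ‖∑ i ∈ s, (θ i * a i) • e i‖ = ‖∑ i ∈ s, a i • e i‖)
    (hPos : ∀ x : E, 0 ≤ x ↔ ∀ i, 0 ≤ f i x)
    (n m : ℕ) (hn : 1 ≤ n) (hm : 1 ≤ m)
    (b : (Fin n → Fin m) → ℝ) :
    sSup {r : ℝ | ∃ φ : Fin n → E →L[ℝ] ℝ, (∀ j, ‖φ j‖ ≤ 1) ∧
        r = |∑ i : Fin m, b (fun _ => i) * ∏ j : Fin n, (φ j) (e i)|}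
      ≤ sSup {r : ℝ | ∃ φ : Fin n → E →L[ℝ] ℝ, (∀ j, ‖φ j‖ ≤ 1) ∧
        r = |∑ ι : Fin n → Fin m, b ι * ∏ j : Fin n, (φ j) (e (ι j))|} :=
  stmt_5_general E e f hBi hExp hUnc n m hn b
end

section
/- Let E be a real Banach lattice with a 1-unconditional basis (e_i), let n ≥ 1 be an integer, and let x*₁, …, x*ₙ ∈ E* be positive continuous linear functionals. Then for every m ≥ 1 and all a₁, …, a_m ∈ ℝ, |∑_{i=1}^m a_i (x*₁(e_i))^{1/n} ⋯ (x*ₙ(e_i))^{1/n}| ≤ ‖x*₁‖^{1/n} ⋯ ‖x*ₙ‖^{1/n} · ‖∑_{i=1}^m a_i e_i‖. Consequently the formula x*(x) = ∑_{i=1}^∞ f_i(x) (x*₁(e_i))^{1/n} ⋯ (x*ₙ(e_i))^{1/n} defines a positive continuous linear functional x* ∈ E* with ‖x*‖ ≤ ‖x*₁‖^{1/n} ⋯ ‖x*ₙ‖^{1/n}. -/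
/-!
Write `cᵢ = ∏ⱼ x*ⱼ(eᵢ)^{1/n}` and `C = ∏ⱼ ‖x*ⱼ‖^{1/n}`. Termwise
`|aᵢ| cᵢ = ∏ⱼ (|aᵢ| x*ⱼ(eᵢ))^{1/n}`, so Hölder's inequality for `n` sequences bounds
`∑ᵢ |aᵢ| cᵢ` by `∏ⱼ x*ⱼ(y)^{1/n} ≤ C ‖y‖` with `y = ∑ᵢ |aᵢ| eᵢ`, and `‖y‖ = ‖∑ᵢ aᵢ eᵢ‖` by
1-unconditionality. This bound on finite expansions makes `∑ᵢ fᵢ(x) cᵢ` Cauchy because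
`∑ᵢ fᵢ(x) eᵢ` is, and the limit inherits the bound `C ‖x‖`.
-/

open Finset

namespace Real

variable {ι κ : Type*}

theorem prod_mul_rpow_of_sum_eq_one {t : Finset κ} {w : κ → ℝ} (hw : ∀ j ∈ t, 0 ≤ w j)
    (hw1 : ∑ j ∈ t, w j = 1) {c : ℝ} (hc : 0 ≤ c) {b : κ → ℝ} (hb : ∀ j ∈ t, 0 ≤ b j) :
    ∏ j ∈ t, (c * b j) ^ w j = c * ∏ j ∈ t, b j ^ w j := by
  rw [prod_congr rfl fun j hj => mul_rpow hc (hb j hj), prod_mul_distrib,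
    ← rpow_sum_of_nonneg hc hw, hw1, rpow_one]

theorem sum_prod_rpow_le_prod_rpow_sum {s : Finset ι} {t : Finset κ} {w : κ → ℝ}
    (hw : ∀ j ∈ t, 0 < w j) (hw1 : ∑ j ∈ t, w j = 1) {b : κ → ι → ℝ}
    (hb : ∀ j ∈ t, ∀ i ∈ s, 0 ≤ b j i) :
    ∑ i ∈ s, ∏ j ∈ t, b j i ^ w j ≤ ∏ j ∈ t, (∑ i ∈ s, b j i) ^ w j := by
  have hS : ∀ j ∈ t, 0 ≤ ∑ i ∈ s, b j i := fun j hj => sum_nonneg (hb j hj)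
  by_cases hz : ∃ j ∈ t, ∑ i ∈ s, b j i = 0
  · obtain ⟨j₀, hj₀, hS₀⟩ := hz
    have hb₀ := (sum_eq_zero_iff_of_nonneg (hb j₀ hj₀)).1 hS₀
    have : ∑ i ∈ s, ∏ j ∈ t, b j i ^ w j = 0 := sum_eq_zero fun i hi =>
      prod_eq_zero hj₀ (by rw [hb₀ i hi, zero_rpow (hw j₀ hj₀).ne'])
    rw [this]
    exact prod_nonneg fun j hj => rpow_nonneg (hS j hj) _
  push Not at hz
  set S : κ → ℝ := fun j => ∑ i ∈ s, b j i
  have hSpos : ∀ j ∈ t, 0 < S j := fun j hj => (hS j hj).lt_of_ne' (hz j hj)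
  set P := ∏ j ∈ t, S j ^ w j
  have hP : 0 ≤ P := prod_nonneg fun j hj => rpow_nonneg (hS j hj) _
  -- normalize every sequence to sum 1 and apply weighted AM-GM termwise
  calc ∑ i ∈ s, ∏ j ∈ t, b j i ^ w j
      = ∑ i ∈ s, (∏ j ∈ t, (b j i / S j) ^ w j) * P := by
        refine sum_congr rfl fun i hi => ?_
        rw [← prod_mul_distrib]
        refine prod_congr rfl fun j hj => ?_
        rw [div_rpow (hb j hj i hi) (hSpos j hj).le,
          div_mul_cancel₀ _ (rpow_pos_of_pos (hSpos j hj) _).ne']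
    _ ≤ ∑ i ∈ s, (∑ j ∈ t, w j * (b j i / S j)) * P := by
        gcongr with i hi
        exact geom_mean_le_arith_mean_weighted t w _ (fun j hj => (hw j hj).le) hw1
          fun j hj => div_nonneg (hb j hj i hi) (hSpos j hj).le
    _ = (∑ j ∈ t, w j * (S j / S j)) * P := by
        rw [← sum_mul, sum_comm]
        simp only [← mul_sum, ← sum_div, S]
    _ = P := by
        rw [sum_congr rfl fun j hj => by rw [div_self (hSpos j hj).ne', mul_one], hw1, one_mul]

end Real

open Function

section FiniteSums

variable {E ι κ : Type*} [SeminormedAddCommGroup E] [NormedSpace ℝ E]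

theorem abs_sum_mul_prod_rpow_le (x : κ → E →L[ℝ] ℝ) {t : Finset κ} {w : κ → ℝ}
    (hw : ∀ j ∈ t, 0 < w j) (hw1 : ∑ j ∈ t, w j = 1) (e : ι → E) {s : Finset ι}
    (hxe : ∀ j ∈ t, ∀ i ∈ s, 0 ≤ x j (e i)) (a : ι → ℝ) :
    |∑ i ∈ s, a i * ∏ j ∈ t, x j (e i) ^ w j|
      ≤ (∏ j ∈ t, ‖x j‖ ^ w j) * ‖∑ i ∈ s, |a i| • e i‖ := by
  have hw0 : ∀ j ∈ t, 0 ≤ w j := fun j hj => (hw j hj).le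
  set y := ∑ i ∈ s, |a i| • e i
  have hxy : ∀ j, x j y = ∑ i ∈ s, |a i| * x j (e i) := fun j => by
    simp only [y, map_sum, map_smul, smul_eq_mul]
  have hxy0 : ∀ j ∈ t, 0 ≤ x j y := fun j hj => by
    rw [hxy]; exact sum_nonneg fun i hi => mul_nonneg (abs_nonneg _) (hxe j hj i hi)
  calc |∑ i ∈ s, a i * ∏ j ∈ t, x j (e i) ^ w j|
      ≤ ∑ i ∈ s, |a i| * ∏ j ∈ t, x j (e i) ^ w j := by
        refine (abs_sum_le_sum_abs _ _).trans_eq (sum_congr rfl fun i hi => ?_)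
        rw [abs_mul, abs_of_nonneg (prod_nonneg fun j hj => Real.rpow_nonneg (hxe j hj i hi) _)]
    _ = ∑ i ∈ s, ∏ j ∈ t, (|a i| * x j (e i)) ^ w j := sum_congr rfl fun i hi =>
        (Real.prod_mul_rpow_of_sum_eq_one hw0 hw1 (abs_nonneg _) fun j hj => hxe j hj i hi).symm
    _ ≤ ∏ j ∈ t, (x j y) ^ w j := by
        simp only [hxy]
        exact Real.sum_prod_rpow_le_prod_rpow_sum hw hw1 fun j hj i hi =>
          mul_nonneg (abs_nonneg _) (hxe j hj i hi)
    _ ≤ ∏ j ∈ t, (‖y‖ * ‖x j‖) ^ w j := by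
        refine prod_le_prod (fun j hj => Real.rpow_nonneg (hxy0 j hj) _) fun j hj => ?_
        refine Real.rpow_le_rpow (hxy0 j hj) ?_ (hw0 j hj)
        rw [mul_comm]
        exact (le_abs_self _).trans ((x j).le_opNorm y)
    _ = (∏ j ∈ t, ‖x j‖ ^ w j) * ‖y‖ := by
        rw [Real.prod_mul_rpow_of_sum_eq_one hw0 hw1 (norm_nonneg _) fun j _ => norm_nonneg _,
          mul_comm]

theorem norm_sum_abs_smul_comp_eq {e : ℕ → E}
    (hUnc : ∀ (a θ : ℕ → ℝ), (∀ i, θ i = 1 ∨ θ i = -1) →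
      ∀ s : Finset ℕ, ‖∑ i ∈ s, (θ i * a i) • e i‖ = ‖∑ i ∈ s, a i • e i‖)
    {σ : ι → ℕ} (hσ : Injective σ) (s : Finset ι) (a : ι → ℝ) :
    ‖∑ i ∈ s, |a i| • e (σ i)‖ = ‖∑ i ∈ s, a i • e (σ i)‖ := by
  set b := extend σ a 0
  have h := hUnc b (fun k => if b k < 0 then -1 else 1) (fun k => by split_ifs <;> simp)
    (s.map ⟨σ, hσ⟩)
  simp only [sum_map, Embedding.coeFn_mk, b, hσ.extend_apply] at h
  rw [← h]
  congr 2 with i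
  split_ifs with hai
  · rw [abs_of_neg hai, neg_one_mul]
  · rw [abs_of_nonneg (not_lt.1 hai), one_mul]

end FiniteSums

section Extension

variable {E ι : Type*} [SeminormedAddCommGroup E] [NormedSpace ℝ E] {e : ι → E} {c : ι → ℝ}
  {C : ℝ}

theorem summable_mul_of_abs_sum_mul_le (hc : ∀ (s : Finset ι) (a : ι → ℝ),
    |∑ i ∈ s, a i * c i| ≤ C * ‖∑ i ∈ s, a i • e i‖) (hC : 0 ≤ C) {b : ι → ℝ}
    (hb : Summable fun i => b i • e i) : Summable fun i => b i * c i := by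
  rw [summable_iff_vanishing_norm]
  intro ε hε
  obtain ⟨s, hs⟩ := hb.vanishing (Metric.ball_mem_nhds 0 (by positivity : 0 < ε / (C + 1)))
  refine ⟨s, fun t ht => ?_⟩
  rw [Real.norm_eq_abs]
  calc |∑ i ∈ t, b i * c i| ≤ C * ‖∑ i ∈ t, b i • e i‖ := hc t b
    _ ≤ C * (ε / (C + 1)) := mul_le_mul_of_nonneg_left (mem_ball_zero_iff.1 (hs t ht)).le hC
    _ < ε := by
        rw [mul_div_assoc', div_lt_iff₀ (by positivity)]
        linarith

theorem abs_tsum_mul_le_of_abs_sum_mul_le (hc : ∀ (s : Finset ι) (a : ι → ℝ),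
    |∑ i ∈ s, a i * c i| ≤ C * ‖∑ i ∈ s, a i • e i‖) {b : ι → ℝ} {x : E}
    (hbe : HasSum (fun i => b i • e i) x) (hbc : Summable fun i => b i * c i) :
    |∑' i, b i * c i| ≤ C * ‖x‖ :=
  le_of_tendsto_of_tendsto' hbc.hasSum.abs (hbe.norm.const_mul C) fun s => hc s b

theorem exists_norm_le_hasSum_mul_of_abs_sum_mul_le {f : ι → E →L[ℝ] ℝ}
    (hExp : ∀ x, HasSum (fun i => f i x • e i) x) (hc : ∀ (s : Finset ι) (a : ι → ℝ),
      |∑ i ∈ s, a i * c i| ≤ C * ‖∑ i ∈ s, a i • e i‖) (hC : 0 ≤ C) :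
    ∃ φ : E →L[ℝ] ℝ, ‖φ‖ ≤ C ∧ ∀ x, HasSum (fun i => f i x * c i) (φ x) := by
  have hsum : ∀ x, Summable fun i => f i x * c i := fun x =>
    summable_mul_of_abs_sum_mul_le hc hC (hExp x).summable
  let φ : E →ₗ[ℝ] ℝ :=
    { toFun := fun x => ∑' i, f i x * c i
      map_add' := fun x y => by
        simp only [map_add, add_mul]
        exact (hsum x).tsum_add (hsum y)
      map_smul' := fun r x => by
        simp only [map_smul, smul_eq_mul, mul_assoc, RingHom.id_apply]
        exact tsum_mul_left }
  have hφ : ∀ x, ‖φ x‖ ≤ C * ‖x‖ := fun x =>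
    abs_tsum_mul_le_of_abs_sum_mul_le hc (hExp x) (hsum x)
  exact ⟨φ.mkContinuous C hφ, φ.mkContinuous_norm_le hC hφ, fun x => (hsum x).hasSum⟩

end Extension

theorem stmt_9_general
    (E : Type*) [NormedAddCommGroup E] [Lattice E] [NormedSpace ℝ E]
    (e : ℕ → E) (f : ℕ → E →L[ℝ] ℝ)
    (hBi : ∀ i j : ℕ, f i (e j) = if i = j then 1 else 0)
    (hExp : ∀ x : E, HasSum (fun i => f i x • e i) x)
    (hUnc : ∀ (a θ : ℕ → ℝ), (∀ i, θ i = 1 ∨ θ i = -1) →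
      ∀ s : Finset ℕ, ‖∑ i ∈ s, (θ i * a i) • e i‖ = ‖∑ i ∈ s, a i • e i‖)
    (hPos : ∀ x : E, 0 ≤ x ↔ ∀ i, 0 ≤ f i x)
    (n : ℕ) (hn : 1 ≤ n)
    (xs : Fin n → E →L[ℝ] ℝ) (hxs : ∀ j, ∀ x : E, 0 ≤ x → 0 ≤ xs j x) :
    (∀ m : ℕ, 1 ≤ m → ∀ a : Fin m → ℝ,
      |∑ i : Fin m, a i * ∏ j : Fin n, (xs j (e i)) ^ ((1 : ℝ) / n)|
        ≤ (∏ j : Fin n, ‖xs j‖ ^ ((1 : ℝ) / n)) * ‖∑ i : Fin m, a i • e i‖) ∧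
    ∃ xstar : E →L[ℝ] ℝ,
      (∀ x : E, 0 ≤ x → 0 ≤ xstar x) ∧
      ‖xstar‖ ≤ ∏ j : Fin n, ‖xs j‖ ^ ((1 : ℝ) / n) ∧
      ∀ x : E, HasSum (fun i => f i x * ∏ j : Fin n, (xs j (e i)) ^ ((1 : ℝ) / n)) (xstar x) := by
  have he : ∀ i, 0 ≤ e i := fun i => (hPos _).2 fun k => by rw [hBi]; split_ifs <;> norm_num
  have hxe : ∀ j i, 0 ≤ xs j (e i) := fun j i => hxs j _ (he i)
  have hw : ∀ j ∈ (univ : Finset (Fin n)), 0 < (1 : ℝ) / n := fun _ _ => by positivity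
  have hw1 : ∑ _j : Fin n, (1 : ℝ) / n = 1 := by
    rw [sum_const, card_univ, Fintype.card_fin, nsmul_eq_mul]
    field_simp
  have bound : ∀ (ι : Type) (σ : ι → ℕ), Injective σ → ∀ (s : Finset ι) (a : ι → ℝ),
      |∑ i ∈ s, a i * ∏ j : Fin n, (xs j (e (σ i))) ^ ((1 : ℝ) / n)|
        ≤ (∏ j : Fin n, ‖xs j‖ ^ ((1 : ℝ) / n)) * ‖∑ i ∈ s, a i • e (σ i)‖ :=
    fun ι σ hσ s a => (abs_sum_mul_prod_rpow_le xs hw hw1 (e ∘ σ)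
      (fun j _ i _ => hxe j (σ i)) a).trans_eq (by rw [comp_def, norm_sum_abs_smul_comp_eq hUnc hσ])
  refine ⟨fun m _ a => bound (Fin m) Fin.val Fin.val_injective univ a, ?_⟩
  obtain ⟨φ, hφ, hsum⟩ := exists_norm_le_hasSum_mul_of_abs_sum_mul_le hExp
    (bound ℕ id injective_id) (prod_nonneg fun j _ => Real.rpow_nonneg (norm_nonneg _) _)
  exact ⟨φ, fun x hx => (hsum x).nonneg fun i => mul_nonneg ((hPos x).1 hx i)
    (prod_nonneg fun j _ => Real.rpow_nonneg (hxe j i) _), hφ, hsum⟩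

/-- Lemma 3.5: for positive functionals `x*₁, …, x*ₙ` on a Banach lattice `E` with a
1-unconditional basis `(eᵢ)`, the coordinatewise geometric mean
`x*(x) = ∑ᵢ fᵢ(x) (x*₁(eᵢ))^{1/n} ⋯ (x*ₙ(eᵢ))^{1/n}` satisfies the Hölder-type inequality on
finite sums and defines a positive continuous functional with
`‖x*‖ ≤ ‖x*₁‖^{1/n} ⋯ ‖x*ₙ‖^{1/n}`. -/
theorem stmt_9
    (E : Type*) [NormedAddCommGroup E] [Lattice E] [IsOrderedAddMonoid E] [HasSolidNorm E] [NormedSpace ℝ E] [CompleteSpace E]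
    (e : ℕ → E) (f : ℕ → E →L[ℝ] ℝ)
    (hBi : ∀ i j : ℕ, f i (e j) = if i = j then 1 else 0)
    (hExp : ∀ x : E, HasSum (fun i => f i x • e i) x)
    (hUnc : ∀ (a θ : ℕ → ℝ), (∀ i, θ i = 1 ∨ θ i = -1) →
      ∀ s : Finset ℕ, ‖∑ i ∈ s, (θ i * a i) • e i‖ = ‖∑ i ∈ s, a i • e i‖)
    (hPos : ∀ x : E, 0 ≤ x ↔ ∀ i, 0 ≤ f i x)
    (n : ℕ) (hn : 1 ≤ n)
    (xs : Fin n → E →L[ℝ] ℝ) (hxs : ∀ j, ∀ x : E, 0 ≤ x → 0 ≤ xs j x) :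
    (∀ m : ℕ, 1 ≤ m → ∀ a : Fin m → ℝ,
      |∑ i : Fin m, a i * ∏ j : Fin n, (xs j (e i)) ^ ((1 : ℝ) / n)|
        ≤ (∏ j : Fin n, ‖xs j‖ ^ ((1 : ℝ) / n)) * ‖∑ i : Fin m, a i • e i‖) ∧
    ∃ xstar : E →L[ℝ] ℝ,
      (∀ x : E, 0 ≤ x → 0 ≤ xstar x) ∧
      ‖xstar‖ ≤ ∏ j : Fin n, ‖xs j‖ ^ ((1 : ℝ) / n) ∧
      ∀ x : E, HasSum (fun i => f i x * ∏ j : Fin n, (xs j (e i)) ^ ((1 : ℝ) / n)) (xstar x) :=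
  stmt_9_general E e f hBi hExp hUnc hPos n hn xs hxs
end

section
/- Let E be a real Banach lattice with a 1-unconditional basis (e_i), let n ≥ 1 and m ≥ 1 be integers, and let a₁, …, a_m ≥ 0. Then sup{ ∑_{i=1}^m a_i x*₁(e_i) ⋯ x*ₙ(e_i) : x*₁, …, x*ₙ ∈ B⁺_{E*} } = sup{ ∑_{i=1}^m a_i (x*(e_i))ⁿ : x* ∈ B⁺_{E*} }. That is, for every positive diagonal element u = ∑_{i=1}^m a_i e_i ⊗ ⋯ ⊗ e_i one has ‖u‖_{|ε|} = ‖u‖_{s,|ε|}: the positive injective tensor norm of u equals its positive symmetric injective tensor norm. -/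
/-!
Positive functionals take nonnegative values on the basis vectors, so by AM-GM
`∑ᵢ aᵢ ∏ⱼ x*ⱼ(eᵢ) ≤ n⁻¹ ∑ⱼ ∑ᵢ aᵢ x*ⱼ(eᵢ)ⁿ`, an average of values of the symmetric form.
Hence every upper bound of the symmetric values bounds the multilinear ones; conversely the
symmetric values are the multilinear values on the diagonal. Both sets thus have the same upper
bounds, and therefore the same `sSup` (also when they are unbounded, where both are `0`).
-/

open Finset

theorem Real.prod_le_inv_card_mul_sum_pow {ι : Type*} {s : Finset ι} (hs : s.Nonempty)
    {x : ι → ℝ} (hx : ∀ j ∈ s, 0 ≤ x j) :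
    ∏ j ∈ s, x j ≤ (#s : ℝ)⁻¹ * ∑ j ∈ s, x j ^ #s := by
  have hcard : (#s : ℝ) ≠ 0 := by simpa using hs.card_pos.ne'
  have amgm := Real.geom_mean_le_arith_mean_weighted s (fun _ => (#s : ℝ)⁻¹) (fun j => x j ^ #s)
    (fun _ _ => by positivity) (by simp [hcard]) (fun j hj => pow_nonneg (hx j hj) _)
  calc ∏ j ∈ s, x j = ∏ j ∈ s, (x j ^ #s) ^ (#s : ℝ)⁻¹ :=
        prod_congr rfl fun j hj => (Real.pow_rpow_inv_natCast (hx j hj) (by simpa using hcard)).symm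
    _ ≤ ∑ j ∈ s, (#s : ℝ)⁻¹ * x j ^ #s := amgm
    _ = (#s : ℝ)⁻¹ * ∑ j ∈ s, x j ^ #s := (mul_sum ..).symm

theorem Real.nonempty_of_upperBounds_eq {s t : Set ℝ} (h : upperBounds s = upperBounds t)
    (hs : s.Nonempty) : t.Nonempty := by
  obtain ⟨x, hx⟩ := hs
  by_contra ht
  have : x - 1 ∈ upperBounds s := by
    rw [h, Set.not_nonempty_iff_eq_empty.mp ht, upperBounds_empty]
    trivial
  linarith [this hx]

theorem Real.sSup_eq_of_upperBounds_eq {s t : Set ℝ} (h : upperBounds s = upperBounds t) :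
    sSup s = sSup t := by
  rcases s.eq_empty_or_nonempty with rfl | hs
  · obtain rfl : t = ∅ := Set.not_nonempty_iff_eq_empty.mp fun ht =>
      Set.not_nonempty_empty (nonempty_of_upperBounds_eq h.symm ht)
    rfl
  by_cases hb : BddAbove s
  · have ht := nonempty_of_upperBounds_eq h hs
    exact ((isLUB_congr h).mp (isLUB_csSup hs hb)).csSup_eq ht |>.symm
  · have hbt : ¬BddAbove t := by rwa [BddAbove, ← h]
    rw [Real.sSup_of_not_bddAbove hb, Real.sSup_of_not_bddAbove hbt]

theorem sum_mul_prod_le_inv_mul_sum_sum_mul_pow {ι : Type*} [Fintype ι] {n : ℕ} (hn : n ≠ 0)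
    {a : ι → ℝ} (ha : ∀ i, 0 ≤ a i) {x : Fin n → ι → ℝ} (hx : ∀ j i, 0 ≤ x j i) :
    ∑ i, a i * ∏ j, x j i ≤ (n : ℝ)⁻¹ * ∑ j, ∑ i, a i * x j i ^ n := by
  have huniv : (univ : Finset (Fin n)).Nonempty := univ_nonempty_iff.mpr ⟨⟨0, by omega⟩⟩
  calc ∑ i, a i * ∏ j, x j i ≤ ∑ i, a i * ((n : ℝ)⁻¹ * ∑ j, x j i ^ n) := by
        refine sum_le_sum fun i _ => mul_le_mul_of_nonneg_left ?_ (ha i)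
        simpa using Real.prod_le_inv_card_mul_sum_pow huniv fun j _ => hx j i
    _ = (n : ℝ)⁻¹ * ∑ j, ∑ i, a i * x j i ^ n := by
        simp only [mul_sum]
        rw [sum_comm]
        exact sum_congr rfl fun j _ => sum_congr rfl fun i _ => by ring

theorem sSup_sum_mul_prod_eq_sSup_sum_mul_pow {Φ ι : Type*} [Fintype ι] {n : ℕ} (hn : n ≠ 0)
    {a : ι → ℝ} (ha : ∀ i, 0 ≤ a i) {K : Set Φ} {v : Φ → ι → ℝ}
    (hv : ∀ φ ∈ K, ∀ i, 0 ≤ v φ i) :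
    sSup {r | ∃ φ : Fin n → Φ, (∀ j, φ j ∈ K) ∧ r = ∑ i, a i * ∏ j, v (φ j) i}
      = sSup {r | ∃ φ ∈ K, r = ∑ i, a i * v φ i ^ n} := by
  apply Real.sSup_eq_of_upperBounds_eq
  apply Set.Subset.antisymm
  · refine upperBounds_mono_set ?_
    rintro r ⟨φ, hφ, rfl⟩
    exact ⟨fun _ => φ, fun _ => hφ, by simp⟩
  · rintro b hb r ⟨φ, hφ, rfl⟩
    calc ∑ i, a i * ∏ j, v (φ j) i ≤ (n : ℝ)⁻¹ * ∑ j, ∑ i, a i * v (φ j) i ^ n :=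
          sum_mul_prod_le_inv_mul_sum_sum_mul_pow hn ha fun j i => hv _ (hφ j) i
      _ ≤ (n : ℝ)⁻¹ * ∑ _ : Fin n, b := by
          gcongr with j
          exact hb ⟨φ j, hφ j, rfl⟩
      _ = b := by simp [hn]

theorem stmt_10_general
    (E : Type*) [NormedAddCommGroup E] [Lattice E] [NormedSpace ℝ E]
    (e : ℕ → E) (f : ℕ → E →L[ℝ] ℝ)
    (hBi : ∀ i j : ℕ, f i (e j) = if i = j then 1 else 0)
    (hPos : ∀ x : E, 0 ≤ x ↔ ∀ i, 0 ≤ f i x)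
    (n m : ℕ) (hn : 1 ≤ n)
    (a : Fin m → ℝ) (ha : ∀ i, 0 ≤ a i) :
    sSup {r : ℝ | ∃ φ : Fin n → E →L[ℝ] ℝ,
        (∀ j, ‖φ j‖ ≤ 1 ∧ ∀ x : E, 0 ≤ x → 0 ≤ (φ j) x) ∧
        r = ∑ i : Fin m, a i * ∏ j : Fin n, (φ j) (e i)}
      = sSup {r : ℝ | ∃ φ : E →L[ℝ] ℝ,
        (‖φ‖ ≤ 1 ∧ ∀ x : E, 0 ≤ x → 0 ≤ φ x) ∧
        r = ∑ i : Fin m, a i * (φ (e i)) ^ n} := by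
  have he : ∀ i, 0 ≤ e i := fun i => (hPos _).2 fun k => by
    rw [hBi]
    split_ifs <;> norm_num
  exact sSup_sum_mul_prod_eq_sSup_sum_mul_pow (by omega) ha
    (K := {φ : E →L[ℝ] ℝ | ‖φ‖ ≤ 1 ∧ ∀ x : E, 0 ≤ x → 0 ≤ φ x}) (v := fun φ i => φ (e i))
    fun φ hφ i => hφ.2 _ (he i)

/-- From the proof of Theorem 3.6: for a Banach lattice `E` with a 1-unconditional basis
`(eᵢ)` and a positive diagonal tensor `u = ∑ᵢ aᵢ eᵢ ⊗ ⋯ ⊗ eᵢ` (`aᵢ ≥ 0`), the positive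
injective tensor norm of `u` (supremum over positive functionals in the dual unit ball)
equals its positive symmetric injective tensor norm. -/
theorem stmt_10
    (E : Type*) [NormedAddCommGroup E] [Lattice E] [HasSolidNorm E] [IsOrderedAddMonoid E] [NormedSpace ℝ E] [CompleteSpace E]
    (e : ℕ → E) (f : ℕ → E →L[ℝ] ℝ)
    (hBi : ∀ i j : ℕ, f i (e j) = if i = j then 1 else 0)
    (hExp : ∀ x : E, HasSum (fun i => f i x • e i) x)
    (hUnc : ∀ (a θ : ℕ → ℝ), (∀ i, θ i = 1 ∨ θ i = -1) →
      ∀ s : Finset ℕ, ‖∑ i ∈ s, (θ i * a i) • e i‖ = ‖∑ i ∈ s, a i • e i‖)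
    (hPos : ∀ x : E, 0 ≤ x ↔ ∀ i, 0 ≤ f i x)
    (n m : ℕ) (hn : 1 ≤ n) (hm : 1 ≤ m)
    (a : Fin m → ℝ) (ha : ∀ i, 0 ≤ a i) :
    sSup {r : ℝ | ∃ φ : Fin n → E →L[ℝ] ℝ,
        (∀ j, ‖φ j‖ ≤ 1 ∧ ∀ x : E, 0 ≤ x → 0 ≤ (φ j) x) ∧
        r = ∑ i : Fin m, a i * ∏ j : Fin n, (φ j) (e i)}
      = sSup {r : ℝ | ∃ φ : E →L[ℝ] ℝ,
        (‖φ‖ ≤ 1 ∧ ∀ x : E, 0 ≤ x → 0 ≤ φ x) ∧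
        r = ∑ i : Fin m, a i * (φ (e i)) ^ n} :=
  stmt_10_general E e f hBi hPos n m hn a ha
end

section
/- Let E be a real Banach lattice with a 1-unconditional basis (e_i), let n ≥ 1 and m ≥ 1 be integers, and let a₁, …, a_m ∈ ℝ. Then sup{ |∑_{i=1}^m a_i x*₁(e_i) ⋯ x*ₙ(e_i)| : x*₁, …, x*ₙ ∈ B_{E*} } = sup{ ∑_{i=1}^m |a_i| x*₁(e_i) ⋯ x*ₙ(e_i) : x*₁, …, x*ₙ ∈ B⁺_{E*} }. That is, for every diagonal element u = ∑_{i=1}^m a_i e_i ⊗ ⋯ ⊗ e_i one has ‖u‖_ε = ‖u‖_{|ε|}: the injective tensor norm of u equals the positive injective tensor norm of |u| = ∑_i |a_i| e_i ⊗ ⋯ ⊗ e_i. -/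
/-!
A 1-unconditional basis makes every truncated sign change `x ↦ ∑_{i ∈ s} θᵢ fᵢ(x) eᵢ`
(`θᵢ = ±1`) a contraction, so for `φ ∈ B_{E*}` the twisted functional `∑_{i ∈ s} θᵢ φ(eᵢ) fᵢ` lies
in `B_{E*}` again and takes the value `θₖ φ(eₖ)` at `eₖ`. Twisting every `φⱼ` by `θᵢ = sign φⱼ(eᵢ)`
gives positive functionals with values `|φⱼ(eᵢ)|`, whence `≤`. Twisting only the first `φⱼ`, by
`θᵢ = sign aᵢ`, turns `∑ aᵢ ∏ⱼ φⱼ(eᵢ)` into `∑ |aᵢ| ∏ⱼ φⱼ(eᵢ)`, whence `≥`.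
-/

open Finset

noncomputable def unitSign (r : ℝ) : ℝ := if 0 ≤ r then 1 else -1

lemma unitSign_eq_one_or_neg_one (r : ℝ) : unitSign r = 1 ∨ unitSign r = -1 := by
  unfold unitSign; split_ifs <;> simp

lemma unitSign_mul_self (r : ℝ) : unitSign r * r = |r| := by
  unfold unitSign
  split_ifs with h
  · rw [one_mul, abs_of_nonneg h]
  · rw [neg_one_mul, abs_of_neg (not_le.1 h)]

section UnconditionalBasis

variable {E : Type*} [NormedAddCommGroup E] [NormedSpace ℝ E] (e : ℕ → E) (f : ℕ → E →L[ℝ] ℝ)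

noncomputable def signTwist (s : Finset ℕ) (θ : ℕ → ℝ) (φ : E →L[ℝ] ℝ) : E →L[ℝ] ℝ :=
  ∑ i ∈ s, (θ i * φ (e i)) • f i

lemma signTwist_apply (s : Finset ℕ) (θ : ℕ → ℝ) (φ : E →L[ℝ] ℝ) (x : E) :
    signTwist e f s θ φ x = ∑ i ∈ s, θ i * φ (e i) * f i x := by
  simp [signTwist, smul_eq_mul]

lemma signTwist_apply_eq_map_sum (s : Finset ℕ) (θ : ℕ → ℝ) (φ : E →L[ℝ] ℝ) (x : E) :
    signTwist e f s θ φ x = φ (∑ i ∈ s, (θ i * f i x) • e i) := by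
  simp only [signTwist_apply, map_sum, map_smul, smul_eq_mul]
  exact sum_congr rfl fun i _ => by ring

variable {e f}
variable (hBi : ∀ i j : ℕ, f i (e j) = if i = j then 1 else 0)
    (hExp : ∀ x : E, HasSum (fun i => f i x • e i) x)
    (hUnc : ∀ (a θ : ℕ → ℝ), (∀ i, θ i = 1 ∨ θ i = -1) →
      ∀ s : Finset ℕ, ‖∑ i ∈ s, (θ i * a i) • e i‖ = ‖∑ i ∈ s, a i • e i‖)

include hBi in
lemma signTwist_apply_basis {s : Finset ℕ} (θ : ℕ → ℝ) (φ : E →L[ℝ] ℝ) {k : ℕ} (hk : k ∈ s) :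
    signTwist e f s θ φ (e k) = θ k * φ (e k) := by
  simp [signTwist_apply, hBi, hk]

include hUnc in
lemma norm_sum_smul_le_of_subset (a : ℕ → ℝ) {s t : Finset ℕ} (hst : s ⊆ t) :
    ‖∑ i ∈ s, a i • e i‖ ≤ ‖∑ i ∈ t, a i • e i‖ := by
  classical
  set ε : ℕ → ℝ := fun i => if i ∈ s then 1 else -1
  have hε : ∀ i, ε i = 1 ∨ ε i = -1 := fun i => by by_cases h : i ∈ s <;> simp [ε, h]
  -- flipping the signs off `s` and averaging with the original sum isolates the part on `s`
  have hsplit : ∑ i ∈ t, a i • e i + ∑ i ∈ t, (ε i * a i) • e i = (2 : ℝ) • ∑ i ∈ s, a i • e i := by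
    rw [← sum_add_distrib, smul_sum, ← sum_filter_of_ne (p := (· ∈ s)), filter_mem_eq_inter,
      inter_eq_right.2 hst]
    · refine sum_congr rfl fun i hi => ?_
      simp only [ε, hi, if_true, one_mul]
      module
    · intro i _ hne
      by_contra hi
      apply hne
      simp only [ε, hi, if_false]
      module
  have := norm_add_le (∑ i ∈ t, a i • e i) (∑ i ∈ t, (ε i * a i) • e i)
  rw [hsplit, hUnc a ε hε, norm_smul, Real.norm_two] at this
  linarith

include hExp hUnc in
lemma norm_sum_sign_mul_coord_smul_le {θ : ℕ → ℝ} (hθ : ∀ i, θ i = 1 ∨ θ i = -1)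
    (x : E) (s : Finset ℕ) :
    ‖∑ i ∈ s, (θ i * f i x) • e i‖ ≤ ‖x‖ := by
  rw [hUnc _ θ hθ]
  exact ge_of_tendsto (hExp x).norm
    (Filter.eventually_atTop.2 ⟨s, fun t hst => norm_sum_smul_le_of_subset hUnc _ hst⟩)

include hExp hUnc in
lemma norm_signTwist_le (s : Finset ℕ) {θ : ℕ → ℝ} (hθ : ∀ i, θ i = 1 ∨ θ i = -1) (φ : E →L[ℝ] ℝ) :
    ‖signTwist e f s θ φ‖ ≤ ‖φ‖ := by
  refine ContinuousLinearMap.opNorm_le_bound _ (norm_nonneg φ) fun x => ?_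
  rw [signTwist_apply_eq_map_sum]
  exact (φ.le_opNorm _).trans <| mul_le_mul_of_nonneg_left
    (norm_sum_sign_mul_coord_smul_le hExp hUnc hθ x s) (norm_nonneg φ)

include hBi hExp hUnc

lemma exists_nonneg_apply_basis_eq_abs [Preorder E] (hf : ∀ x : E, 0 ≤ x → ∀ i, 0 ≤ f i x)
    (s : Finset ℕ) (φ : E →L[ℝ] ℝ) :
    ∃ ψ : E →L[ℝ] ℝ, ‖ψ‖ ≤ ‖φ‖ ∧ (∀ x, 0 ≤ x → 0 ≤ ψ x) ∧ ∀ k ∈ s, ψ (e k) = |φ (e k)| := by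
  have hθ : ∀ i, unitSign (φ (e i)) * φ (e i) = |φ (e i)| := fun i => unitSign_mul_self _
  refine ⟨signTwist e f s (fun i => unitSign (φ (e i))) φ,
    norm_signTwist_le hExp hUnc s (fun _ => unitSign_eq_one_or_neg_one _) φ,
    fun x hx => ?_, fun k hk => ?_⟩
  · rw [signTwist_apply]
    exact sum_nonneg fun i _ => mul_nonneg (hθ i ▸ abs_nonneg _) (hf x hx i)
  · rw [signTwist_apply_basis hBi _ _ hk, hθ]

lemma exists_nonneg_abs_sum_mul_prod_le [Preorder E] (hf : ∀ x : E, 0 ≤ x → ∀ i, 0 ≤ f i x)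
    {m n : ℕ} (a : Fin m → ℝ) (φ : Fin n → E →L[ℝ] ℝ) :
    ∃ ψ : Fin n → E →L[ℝ] ℝ, (∀ j, ‖ψ j‖ ≤ ‖φ j‖ ∧ ∀ x, 0 ≤ x → 0 ≤ ψ j x) ∧
      |∑ i : Fin m, a i * ∏ j, φ j (e i)| ≤ ∑ i : Fin m, |a i| * ∏ j, ψ j (e i) := by
  choose ψ hψ hψ_nonneg hψ_basis using
    fun j => exists_nonneg_apply_basis_eq_abs hBi hExp hUnc hf (range m) (φ j)
  refine ⟨ψ, fun j => ⟨hψ j, hψ_nonneg j⟩, ?_⟩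
  calc |∑ i : Fin m, a i * ∏ j, φ j (e i)| ≤ ∑ i : Fin m, |a i * ∏ j, φ j (e i)| :=
        abs_sum_le_sum_abs _ _
    _ = ∑ i : Fin m, |a i| * ∏ j, ψ j (e i) := sum_congr rfl fun i _ => by
        rw [abs_mul, abs_prod]
        congr 1
        exact prod_congr rfl fun j _ => (hψ_basis j i (mem_range.2 i.isLt)).symm

lemma exists_sum_mul_prod_eq_sum_abs_mul_prod {m k : ℕ} (a : Fin m → ℝ)
    (φ : Fin (k + 1) → E →L[ℝ] ℝ) :
    ∃ ψ : Fin (k + 1) → E →L[ℝ] ℝ, (∀ j, ‖ψ j‖ ≤ ‖φ j‖) ∧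
      ∑ i : Fin m, a i * ∏ j, ψ j (e i) = ∑ i : Fin m, |a i| * ∏ j, φ j (e i) := by
  set θ : ℕ → ℝ := fun i => if h : i < m then unitSign (a ⟨i, h⟩) else 1
  have hθ : ∀ i, θ i = 1 ∨ θ i = -1 := fun i => by
    unfold θ
    split_ifs
    exacts [unitSign_eq_one_or_neg_one _, Or.inl rfl]
  refine ⟨Fin.cons (α := fun _ => E →L[ℝ] ℝ) (signTwist e f (range m) θ (φ 0)) (Fin.tail φ),
    Fin.cases ?head fun _ => le_rfl, sum_congr rfl fun i _ => ?summand⟩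
  case head =>
    rw [Fin.cons_zero]
    exact norm_signTwist_le hExp hUnc _ hθ _
  have hθi : θ i = unitSign (a i) := by simp [θ]
  rw [Fin.prod_univ_succ, Fin.prod_univ_succ, Fin.cons_zero,
    signTwist_apply_basis hBi _ _ (mem_range.2 i.isLt), hθi, ← unitSign_mul_self (a i)]
  simp only [Fin.cons_succ, Fin.tail]
  ring

end UnconditionalBasis

theorem stmt_11_general
    (E : Type*) [NormedAddCommGroup E] [Lattice E] [NormedSpace ℝ E]
    (e : ℕ → E) (f : ℕ → E →L[ℝ] ℝ)
    (hBi : ∀ i j : ℕ, f i (e j) = if i = j then 1 else 0)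
    (hExp : ∀ x : E, HasSum (fun i => f i x • e i) x)
    (hUnc : ∀ (a θ : ℕ → ℝ), (∀ i, θ i = 1 ∨ θ i = -1) →
      ∀ s : Finset ℕ, ‖∑ i ∈ s, (θ i * a i) • e i‖ = ‖∑ i ∈ s, a i • e i‖)
    (hPos : ∀ x : E, 0 ≤ x ↔ ∀ i, 0 ≤ f i x)
    (n m : ℕ) (hn : 1 ≤ n)
    (a : Fin m → ℝ) :
    sSup {r : ℝ | ∃ φ : Fin n → E →L[ℝ] ℝ, (∀ j, ‖φ j‖ ≤ 1) ∧
        r = |∑ i : Fin m, a i * ∏ j : Fin n, (φ j) (e i)|}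
      = sSup {r : ℝ | ∃ φ : Fin n → E →L[ℝ] ℝ,
        (∀ j, ‖φ j‖ ≤ 1 ∧ ∀ x : E, 0 ≤ x → 0 ≤ (φ j) x) ∧
        r = ∑ i : Fin m, |a i| * ∏ j : Fin n, (φ j) (e i)} := by
  obtain ⟨k, rfl⟩ : ∃ k, n = k + 1 := ⟨n - 1, by omega⟩
  apply csSup_eq_csSup_of_forall_exists_le
  · rintro _ ⟨φ, hφ, rfl⟩
    obtain ⟨ψ, hψ, hle⟩ :=
      exists_nonneg_abs_sum_mul_prod_le hBi hExp hUnc (fun x => (hPos x).1) a φ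
    exact ⟨_, ⟨ψ, fun j => ⟨(hψ j).1.trans (hφ j), (hψ j).2⟩, rfl⟩, hle⟩
  · rintro _ ⟨φ, hφ, rfl⟩
    obtain ⟨ψ, hψ, heq⟩ := exists_sum_mul_prod_eq_sum_abs_mul_prod hBi hExp hUnc a φ
    exact ⟨_, ⟨ψ, fun j => (hψ j).trans (hφ j).1, rfl⟩, heq ▸ le_abs_self _⟩

/-- From the proof of Theorem 3.6: for a Banach lattice `E` with a 1-unconditional basis
`(eᵢ)` and a diagonal tensor `u = ∑ᵢ aᵢ eᵢ ⊗ ⋯ ⊗ eᵢ`, the injective tensor norm of `u`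
equals the positive injective tensor norm of `|u| = ∑ᵢ |aᵢ| eᵢ ⊗ ⋯ ⊗ eᵢ` (supremum over
positive functionals in the dual unit ball). -/
theorem stmt_11
    (E : Type*) [NormedAddCommGroup E] [Lattice E] [HasSolidNorm E] [IsOrderedAddMonoid E] [NormedSpace ℝ E] [CompleteSpace E]
    (e : ℕ → E) (f : ℕ → E →L[ℝ] ℝ)
    (hBi : ∀ i j : ℕ, f i (e j) = if i = j then 1 else 0)
    (hExp : ∀ x : E, HasSum (fun i => f i x • e i) x)
    (hUnc : ∀ (a θ : ℕ → ℝ), (∀ i, θ i = 1 ∨ θ i = -1) →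
      ∀ s : Finset ℕ, ‖∑ i ∈ s, (θ i * a i) • e i‖ = ‖∑ i ∈ s, a i • e i‖)
    (hPos : ∀ x : E, 0 ≤ x ↔ ∀ i, 0 ≤ f i x)
    (n m : ℕ) (hn : 1 ≤ n) (hm : 1 ≤ m)
    (a : Fin m → ℝ) :
    sSup {r : ℝ | ∃ φ : Fin n → E →L[ℝ] ℝ, (∀ j, ‖φ j‖ ≤ 1) ∧
        r = |∑ i : Fin m, a i * ∏ j : Fin n, (φ j) (e i)|}
      = sSup {r : ℝ | ∃ φ : Fin n → E →L[ℝ] ℝ,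
        (∀ j, ‖φ j‖ ≤ 1 ∧ ∀ x : E, 0 ≤ x → 0 ≤ (φ j) x) ∧
        r = ∑ i : Fin m, |a i| * ∏ j : Fin n, (φ j) (e i)} :=
  stmt_11_general E e f hBi hExp hUnc hPos n m hn a
end
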